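/- arXiv:1805.00746 — 2 statements merged into one kernel-verified Lean document; each statement's English description precedes it below -/
import Mathlib

section
/- Let U ⊆ ℝⁿ be open and let w_{ij} and w̃_{ij} (i,j ∈ {1,…,n}) be continuous real-valued functions on U, skew-symmetric in i,j, such that w̃_{ml}(u) w̃_{nk}(u) = w_{ml}(u) w_{nk}(u) for all indices m,l,n,k and all u ∈ U. Then: (a) at every point u ∈ U there exists ε(u) ∈ {+1,−1} with w̃_{ij}(u) = ε(u) w_{ij}(u) for all i,j; and (b) if moreover U is connected and at every point of U some entry w_{ij} is nonzero, then either w̃_{ij} = w_{ij} on all of U or w̃_{ij} = −w_{ij} on all of U. -/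
open scoped BigOperators

/-- if two continuous skew-symmetric matrix fields `w`, `w̃` on an open set
`U ⊆ ℝⁿ` satisfy `w̃_{ml} w̃_{nk} = w_{ml} w_{nk}` for all indices, then (a) at every point
`w̃ = ε w` for some sign `ε ∈ {1, −1}`, and (b) if `U` is connected and `w` is nowhere zero,
then `w̃ = w` on all of `U` or `w̃ = −w` on all of `U`. -/
theorem skew_form_unique_up_to_sign {n : ℕ} (U : Set (Fin n → ℝ)) (hU : IsOpen U)
    (w wt : (Fin n → ℝ) → Matrix (Fin n) (Fin n) ℝ)
    (hwc : ∀ i j, ContinuousOn (fun u => w u i j) U)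
    (hwtc : ∀ i j, ContinuousOn (fun u => wt u i j) U)
    (hskew : ∀ u ∈ U, ∀ i j, w u i j = - w u j i)
    (hskewt : ∀ u ∈ U, ∀ i j, wt u i j = - wt u j i)
    (hprod : ∀ u ∈ U, ∀ m l p k, wt u m l * wt u p k = w u m l * w u p k) :
    (∀ u ∈ U, ∃ ε : ℝ, (ε = 1 ∨ ε = -1) ∧ ∀ i j, wt u i j = ε * w u i j) ∧
    (IsConnected U → (∀ u ∈ U, ∃ i j, w u i j ≠ 0) →
      ((∀ u ∈ U, ∀ i j, wt u i j = w u i j) ∨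
       (∀ u ∈ U, ∀ i j, wt u i j = - w u i j))) := by
  -- Part (a)
  have parta : ∀ u ∈ U, ∃ ε : ℝ, (ε = 1 ∨ ε = -1) ∧ ∀ i j, wt u i j = ε * w u i j := by
    intro u hu
    by_cases hz : ∃ i j, w u i j ≠ 0
    · obtain ⟨i0, j0, h0⟩ := hz
      have hsq : wt u i0 j0 * wt u i0 j0 = w u i0 j0 * w u i0 j0 := hprod u hu i0 j0 i0 j0
      have hcases : wt u i0 j0 = w u i0 j0 ∨ wt u i0 j0 = - w u i0 j0 :=
        mul_self_eq_mul_self_iff.mp hsq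
      rcases hcases with hb | hb
      · refine ⟨1, Or.inl rfl, fun i j => ?_⟩
        have := hprod u hu i j i0 j0
        rw [hb] at this
        have := mul_right_cancel₀ h0 this
        simpa using this
      · refine ⟨-1, Or.inr rfl, fun i j => ?_⟩
        have h1 := hprod u hu i j i0 j0
        rw [hb] at h1
        have h2 : (- wt u i j) * w u i0 j0 = w u i j * w u i0 j0 := by ring_nf; ring_nf at h1; linarith
        have := mul_right_cancel₀ h0 h2
        linarith
    · push_neg at hz
      refine ⟨1, Or.inl rfl, fun i j => ?_⟩
      have hsq : wt u i j * wt u i j = w u i j * w u i j := hprod u hu i j i j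
      rw [hz i j] at hsq
      have : wt u i j = 0 := by simpa using hsq
      rw [this, hz i j]; ring
  refine ⟨parta, ?_⟩
  intro hconn hnz
  -- define A and B
  classical
  set A : Set (Fin n → ℝ) := {u | u ∈ U ∧ ∀ i j, wt u i j = w u i j} with hA
  set B : Set (Fin n → ℝ) := {u | u ∈ U ∧ ∀ i j, wt u i j = - w u i j} with hB
  -- key: at each point of U with nonzero entry, if wt = w at that entry (nonzero), then wt = w
  have key : ∀ v ∈ U, ∀ i0 j0, w v i0 j0 ≠ 0 → wt v i0 j0 = w v i0 j0 →
      ∀ i j, wt v i j = w v i j := by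
    intro v hv i0 j0 h0 heq i j
    have := hprod v hv i j i0 j0
    rw [heq] at this
    exact mul_right_cancel₀ h0 this
  have keyn : ∀ v ∈ U, ∀ i0 j0, w v i0 j0 ≠ 0 → wt v i0 j0 = - w v i0 j0 →
      ∀ i j, wt v i j = - w v i j := by
    intro v hv i0 j0 h0 heq i j
    have h1 := hprod v hv i j i0 j0
    rw [heq] at h1
    have h2 : (- wt v i j) * w v i0 j0 = w v i j * w v i0 j0 := by ring_nf; ring_nf at h1; linarith
    have := mul_right_cancel₀ h0 h2
    linarith
  have hsqall : ∀ v ∈ U, ∀ i j,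
      (wt v i j - w v i j) * (wt v i j + w v i j) = 0 := by
    intro v hv i j
    have := hprod v hv i j i j
    ring_nf
    nlinarith [this]
  -- A open
  have hAopen : IsOpen A := by
    rw [isOpen_iff_mem_nhds]
    intro u hu
    obtain ⟨huU, hueq⟩ := hu
    obtain ⟨i0, j0, h0⟩ := hnz u huU
    -- h = wt + w at (i0,j0); nonzero at u
    have hcont : ContinuousOn (fun v => wt v i0 j0 + w v i0 j0) U :=
      (hwtc i0 j0).add (hwc i0 j0)
    have hopen : IsOpen (U ∩ (fun v => wt v i0 j0 + w v i0 j0) ⁻¹' {0}ᶜ) :=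
      hcont.isOpen_inter_preimage hU (isOpen_compl_singleton)
    have humem : u ∈ U ∩ (fun v => wt v i0 j0 + w v i0 j0) ⁻¹' {0}ᶜ := by
      refine ⟨huU, ?_⟩
      simp only [Set.mem_preimage, Set.mem_compl_iff, Set.mem_singleton_iff]
      rw [hueq i0 j0]
      intro h
      apply h0
      linarith
    refine Filter.mem_of_superset (hopen.mem_nhds humem) ?_
    rintro v ⟨hvU, hvne⟩
    simp only [Set.mem_preimage, Set.mem_compl_iff, Set.mem_singleton_iff] at hvne
    have hzero := hsqall v hvU i0 j0
    have heq : wt v i0 j0 = w v i0 j0 := by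
      rcases mul_eq_zero.mp hzero with h | h
      · linarith
      · exact absurd h hvne
    have hwne : w v i0 j0 ≠ 0 := by
      intro h
      apply hvne
      rw [heq, h]; ring
    exact ⟨hvU, key v hvU i0 j0 hwne heq⟩
  -- B open
  have hBopen : IsOpen B := by
    rw [isOpen_iff_mem_nhds]
    intro u hu
    obtain ⟨huU, hueq⟩ := hu
    obtain ⟨i0, j0, h0⟩ := hnz u huU
    have hcont : ContinuousOn (fun v => wt v i0 j0 - w v i0 j0) U :=
      (hwtc i0 j0).sub (hwc i0 j0)
    have hopen : IsOpen (U ∩ (fun v => wt v i0 j0 - w v i0 j0) ⁻¹' {0}ᶜ) :=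
      hcont.isOpen_inter_preimage hU (isOpen_compl_singleton)
    have humem : u ∈ U ∩ (fun v => wt v i0 j0 - w v i0 j0) ⁻¹' {0}ᶜ := by
      refine ⟨huU, ?_⟩
      simp only [Set.mem_preimage, Set.mem_compl_iff, Set.mem_singleton_iff]
      rw [hueq i0 j0]
      intro h
      apply h0
      linarith
    refine Filter.mem_of_superset (hopen.mem_nhds humem) ?_
    rintro v ⟨hvU, hvne⟩
    simp only [Set.mem_preimage, Set.mem_compl_iff, Set.mem_singleton_iff] at hvne
    have hzero := hsqall v hvU i0 j0
    have heq : wt v i0 j0 = - w v i0 j0 := by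
      rcases mul_eq_zero.mp hzero with h | h
      · exact absurd (by linarith : wt v i0 j0 - w v i0 j0 = 0) hvne
      · linarith
    have hwne : w v i0 j0 ≠ 0 := by
      intro h
      apply hvne
      rw [heq, h]; ring
    exact ⟨hvU, keyn v hvU i0 j0 hwne heq⟩
  -- disjoint
  have hdisj : Disjoint A B := by
    rw [Set.disjoint_left]
    rintro u ⟨huU, ha⟩ ⟨_, hb⟩
    obtain ⟨i, j, hij⟩ := hnz u huU
    have := (ha i j).symm.trans (hb i j)
    apply hij; linarith
  -- cover
  have hcover : U ⊆ A ∪ B := by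
    intro u hu
    obtain ⟨ε, hε, heq⟩ := parta u hu
    rcases hε with h1 | h1
    · left; exact ⟨hu, fun i j => by rw [heq i j, h1]; ring⟩
    · right; exact ⟨hu, fun i j => by rw [heq i j, h1]; ring⟩
  rcases hconn.isPreconnected.subset_or_subset hAopen hBopen hdisj hcover with h | h
  · exact Or.inl (fun u hu i j => (h hu).2 i j)
  · exact Or.inr (fun u hu i j => (h hu).2 i j)
end

section
/- Let U ⊆ ℝ² be a connected open set with coordinates (p,q), and let g be a smooth field of symmetric 2×2 real matrices (g_{ij}) on U (indices 1 ↔ p, 2 ↔ q). Then g satisfies the cyclic condition ∂_k g_{ij} + ∂_i g_{jk} + ∂_j g_{ki} = 0 for all i,j,k ∈ {1,2} if and only if there exist real constants a, b, c, α, β, γ such that on U: g₁₁ = a q² − 2 b q + α, g₁₂ = g₂₁ = −a p q + b p − c q + β, and g₂₂ = a p² + 2 c p + γ. Equivalently, every 2-component Monge metric is a quadratic form with constant coefficients in the differentials dp, dq and p dq − q dp. -/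
open scoped BigOperators

/-- Partial derivative `∂_k f` in the `k`-th coordinate direction. -/
noncomputable def pd {n : ℕ} (k : Fin n) (f : (Fin n → ℝ) → ℝ) (u : Fin n → ℝ) : ℝ :=
  fderiv ℝ f u (Pi.single k 1)

section Toolkit
variable {n : ℕ} {f g : (Fin n → ℝ) → ℝ} {u : Fin n → ℝ} {k : Fin n}

lemma pd_congr {U : Set (Fin n → ℝ)} (hU : IsOpen U) (hu : u ∈ U)
    (h : ∀ x ∈ U, f x = g x) : pd k f u = pd k g u := by
  unfold pd
  rw [Filter.EventuallyEq.fderiv_eq (Filter.eventuallyEq_of_mem (hU.mem_nhds hu) h)]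

@[simp] lemma pd_const (c : ℝ) : pd k (fun _ => c) u = 0 := by simp [pd]

lemma pd_add (hf : DifferentiableAt ℝ f u) (hg : DifferentiableAt ℝ g u) :
    pd k (fun x => f x + g x) u = pd k f u + pd k g u := by
  simp [pd, fderiv_fun_add hf hg]

lemma pd_sub (hf : DifferentiableAt ℝ f u) (hg : DifferentiableAt ℝ g u) :
    pd k (fun x => f x - g x) u = pd k f u - pd k g u := by
  simp [pd, fderiv_fun_sub hf hg]

lemma pd_neg : pd k (fun x => -f x) u = -pd k f u := by simp [pd, fderiv_neg]

lemma pd_const_mul (c : ℝ) (hf : DifferentiableAt ℝ f u) :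
    pd k (fun x => c * f x) u = c * pd k f u := by
  simp [pd, fderiv_const_mul hf c]

lemma pd_mul (hf : DifferentiableAt ℝ f u) (hg : DifferentiableAt ℝ g u) :
    pd k (fun x => f x * g x) u = f u * pd k g u + pd k f u * g u := by
  simp [pd, fderiv_fun_mul hf hg]; ring

lemma pd_coord (i : Fin n) : pd k (fun x => x i) u = if i = k then 1 else 0 := by
  have h : (fun x : Fin n → ℝ => x i)
      = (ContinuousLinearMap.proj (R := ℝ) (φ := fun _ : Fin n => ℝ) i) := rfl
  rw [pd, h, ContinuousLinearMap.fderiv]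
  simp [Pi.single_apply]
end Toolkit

section Smooth
variable {n : ℕ} {f : (Fin n → ℝ) → ℝ} {U : Set (Fin n → ℝ)}

lemma contDiffOn_pd (hU : IsOpen U) (hf : ContDiffOn ℝ (⊤ : ℕ∞) f U) (m : Fin n) :
    ContDiffOn ℝ (⊤ : ℕ∞) (pd m f) U := by
  have h1 : ContDiffOn ℝ (⊤ : ℕ∞) (fderiv ℝ f) U := hf.fderiv_of_isOpen hU (by simp)
  exact h1.clm_apply contDiffOn_const

lemma diffAt_of_contDiffOn (hU : IsOpen U) (hf : ContDiffOn ℝ (⊤ : ℕ∞) f U) {u : Fin n → ℝ}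
    (hu : u ∈ U) : DifferentiableAt ℝ f u :=
  (hf.contDiffAt (hU.mem_nhds hu)).differentiableAt (by simp)

lemma pd_comm (hU : IsOpen U) (hf : ContDiffOn ℝ (⊤ : ℕ∞) f U) {u : Fin n → ℝ} (hu : u ∈ U)
    (k m : Fin n) : pd k (pd m f) u = pd m (pd k f) u := by
  have hca : ContDiffAt ℝ (⊤ : ℕ∞) f u := hf.contDiffAt (hU.mem_nhds hu)
  have hsym : IsSymmSndFDerivAt ℝ f u := hca.isSymmSndFDerivAt (by rw [minSmoothness_of_isRCLikeNormedField]; exact WithTop.coe_le_coe.mpr le_top)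
  have hd : DifferentiableAt ℝ (fderiv ℝ f) u := by
    have := hca.fderiv_right (m := (⊤ : ℕ∞)) (by simp)
    exact this.differentiableAt (by simp)
  have key : ∀ v w : Fin n → ℝ,
      fderiv ℝ (fun x => fderiv ℝ f x v) u w = fderiv ℝ (fderiv ℝ f) u w v := by
    intro v w
    rw [fderiv_clm_apply hd (differentiableAt_const v)]
    simp
  show fderiv ℝ (fun x => fderiv ℝ f x (Pi.single m 1)) u (Pi.single k 1) = _
  rw [key, hsym, ← key]
  rfl
end Smooth

lemma fderiv_eq_zero_of_pd {f : (Fin 2 → ℝ) → ℝ} {u : Fin 2 → ℝ}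
    (hf : DifferentiableAt ℝ f u) (h0 : pd 0 f u = 0) (h1 : pd 1 f u = 0) :
    fderiv ℝ f u = 0 := by
  ext v
  have hv : v = v 0 • (Pi.single 0 1 : Fin 2 → ℝ) + v 1 • (Pi.single 1 1 : Fin 2 → ℝ) := by
    funext j; fin_cases j <;> simp [Pi.single_apply]
  rw [ContinuousLinearMap.zero_apply, hv, map_add, map_smul, map_smul]
  simp only [smul_eq_mul]
  rw [show fderiv ℝ f u (Pi.single 0 1) = pd 0 f u from rfl,
      show fderiv ℝ f u (Pi.single 1 1) = pd 1 f u from rfl, h0, h1]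
  ring

lemma const_of_pd_zero {U : Set (Fin 2 → ℝ)} (hU : IsOpen U) (hUc : IsPreconnected U)
    {f : (Fin 2 → ℝ) → ℝ} (hf : ContDiffOn ℝ (⊤ : ℕ∞) f U)
    (h0 : ∀ u ∈ U, pd 0 f u = 0) (h1 : ∀ u ∈ U, pd 1 f u = 0) :
    ∀ u ∈ U, ∀ v ∈ U, f u = f v := by
  have hdiff : ∀ u ∈ U, DifferentiableAt ℝ f u := fun u hu =>
    (hf.contDiffAt (hU.mem_nhds hu)).differentiableAt (by simp)
  have hzero : ∀ u ∈ U, fderiv ℝ f u = 0 := fun u hu =>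
    fderiv_eq_zero_of_pd (hdiff u hu) (h0 u hu) (h1 u hu)
  have hloc : ∀ u ∈ U, ∃ ε > 0, Metric.ball u ε ⊆ U ∧ ∀ y ∈ Metric.ball u ε, f y = f u := by
    intro u hu
    obtain ⟨ε, hε, hball⟩ := Metric.isOpen_iff.1 hU u hu
    refine ⟨ε, hε, hball, fun y hy => ?_⟩
    refine (convex_ball u ε).is_const_of_fderivWithin_eq_zero
      (fun z hz => (hdiff z (hball hz)).differentiableWithinAt) ?_ hy (Metric.mem_ball_self hε)
    intro z hz
    rw [fderivWithin_of_isOpen Metric.isOpen_ball hz]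
    exact hzero z (hball hz)
  intro u hu v hv
  by_contra hne
  set A := {x | x ∈ U ∧ f x = f v} with hA
  set B := {x | x ∈ U ∧ f x ≠ f v} with hB
  have hAopen : IsOpen A := by
    rw [Metric.isOpen_iff]
    rintro x ⟨hxU, hxv⟩
    obtain ⟨ε, hε, hball, hconst⟩ := hloc x hxU
    exact ⟨ε, hε, fun y hy => ⟨hball hy, (hconst y hy).trans hxv⟩⟩
  have hBopen : IsOpen B := by
    have h : B = U ∩ f ⁻¹' {f v}ᶜ := by ext x; simp [hB]
    rw [h]
    exact hf.continuousOn.isOpen_inter_preimage hU isOpen_compl_singleton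
  have hsub : U ⊆ A ∪ B := by
    intro x hx
    by_cases h : f x = f v
    · exact Or.inl ⟨hx, h⟩
    · exact Or.inr ⟨hx, h⟩
  have hAne : (U ∩ A).Nonempty := ⟨v, hv, hv, rfl⟩
  have hBne : (U ∩ B).Nonempty := ⟨u, hu, hu, hne⟩
  obtain ⟨x, _, ⟨_, hx1⟩, ⟨_, hx2⟩⟩ := hUc A B hAopen hBopen hsub hAne hBne
  exact hx2 hx1

/-- a smooth symmetric 2×2 matrix field `g` on a connected open `U ⊆ ℝ²`
(coordinates `p = u 0`, `q = u 1`) satisfies the cyclic (Monge) condition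
`∂_k g_{ij} + ∂_i g_{jk} + ∂_j g_{ki} = 0` iff there are constants `a b c α β γ` with
`g₁₁ = a q² − 2bq + α`, `g₁₂ = g₂₁ = −apq + bp − cq + β`, `g₂₂ = a p² + 2cp + γ`,
i.e. iff `g` is a constant-coefficient quadratic form in `dp`, `dq`, `p dq − q dp`. -/
theorem monge_metric_2d_classification (U : Set (Fin 2 → ℝ)) (hU : IsOpen U)
    (hUconn : IsConnected U)
    (g : (Fin 2 → ℝ) → Matrix (Fin 2) (Fin 2) ℝ)
    (hsym : ∀ u ∈ U, ∀ i j, g u i j = g u j i)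
    (hsm : ∀ i j, ContDiffOn ℝ (⊤ : ℕ∞) (fun u => g u i j) U) :
    (∀ u ∈ U, ∀ i j k, pd k (fun x => g x i j) u + pd i (fun x => g x j k) u
        + pd j (fun x => g x k i) u = 0)
    ↔ ∃ a b c α β γ : ℝ, ∀ u ∈ U,
        g u 0 0 = a * (u 1) ^ 2 - 2 * b * u 1 + α ∧
        g u 0 1 = -(a * u 0 * u 1) + b * u 0 - c * u 1 + β ∧
        g u 1 0 = -(a * u 0 * u 1) + b * u 0 - c * u 1 + β ∧
        g u 1 1 = a * (u 0) ^ 2 + 2 * c * u 0 + γ := by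
  have hUc : IsPreconnected U := hUconn.isPreconnected
  obtain ⟨u₀, hu₀⟩ := hUconn.nonempty
  constructor
  · intro hcyc
    -- component functions
    set E : (Fin 2 → ℝ) → ℝ := fun x => g x 0 0 with hEdef
    set F : (Fin 2 → ℝ) → ℝ := fun x => g x 0 1 with hFdef
    set G : (Fin 2 → ℝ) → ℝ := fun x => g x 1 1 with hGdef
    have hE : ContDiffOn ℝ (⊤ : ℕ∞) E U := hsm 0 0
    have hF : ContDiffOn ℝ (⊤ : ℕ∞) F U := hsm 0 1
    have hG : ContDiffOn ℝ (⊤ : ℕ∞) G U := hsm 1 1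
    -- first-order consequences of the cyclic condition
    have h1 : ∀ u ∈ U, pd 0 E u = 0 := by
      intro u hu; have := hcyc u hu 0 0 0; rw [← hEdef] at this; linarith
    have h2 : ∀ u ∈ U, pd 1 G u = 0 := by
      intro u hu; have := hcyc u hu 1 1 1; rw [← hGdef] at this; linarith
    have h3 : ∀ u ∈ U, pd 1 E u = -2 * pd 0 F u := by
      intro u hu
      have hc := hcyc u hu 0 0 1
      have hsw : pd 0 (fun x => g x 1 0) u = pd 0 F u :=
        pd_congr hU hu (fun x hx => hsym x hx 1 0)
      rw [← hEdef, ← hFdef] at hc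
      rw [hsw] at hc; linarith
    have h4 : ∀ u ∈ U, pd 0 G u = -2 * pd 1 F u := by
      intro u hu
      have hc := hcyc u hu 1 1 0
      have hsw : pd 1 (fun x => g x 1 0) u = pd 1 F u :=
        pd_congr hU hu (fun x hx => hsym x hx 1 0)
      rw [← hGdef, ← hFdef] at hc
      rw [hsw] at hc; linarith
    -- smoothness of first partials
    have hFp : ContDiffOn ℝ (⊤ : ℕ∞) (pd 0 F) U := contDiffOn_pd hU hF 0
    have hFq : ContDiffOn ℝ (⊤ : ℕ∞) (pd 1 F) U := contDiffOn_pd hU hF 1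
    have hEq : ContDiffOn ℝ (⊤ : ℕ∞) (pd 1 E) U := contDiffOn_pd hU hE 1
    have hGp : ContDiffOn ℝ (⊤ : ℕ∞) (pd 0 G) U := contDiffOn_pd hU hG 0
    -- mixed partials of E and G vanish
    have hEmix : ∀ u ∈ U, pd 0 (pd 1 E) u = 0 := by
      intro u hu
      rw [pd_comm hU hE hu 0 1, pd_congr hU hu (f := pd 0 E) (g := fun _ => (0:ℝ)) h1]
      simp
    have hGmix : ∀ u ∈ U, pd 1 (pd 0 G) u = 0 := by
      intro u hu
      rw [pd_comm hU hG hu 1 0, pd_congr hU hu (f := pd 1 G) (g := fun _ => (0:ℝ)) h2]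
      simp
    -- second-order consequences
    have s1 : ∀ u ∈ U, pd 0 (pd 0 F) u = 0 := by
      intro u hu
      have e3 : pd 0 (pd 1 E) u = -2 * pd 0 (pd 0 F) u := by
        rw [pd_congr hU hu (g := fun x => -2 * pd 0 F x) h3,
            pd_const_mul _ (diffAt_of_contDiffOn hU hFp hu)]
      have := hEmix u hu; linarith
    have s2 : ∀ u ∈ U, pd 1 (pd 1 F) u = 0 := by
      intro u hu
      have e3 : pd 1 (pd 0 G) u = -2 * pd 1 (pd 1 F) u := by
        rw [pd_congr hU hu (g := fun x => -2 * pd 1 F x) h4,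
            pd_const_mul _ (diffAt_of_contDiffOn hU hFq hu)]
      have := hGmix u hu; linarith
    have s3 : ∀ u ∈ U, pd 1 (pd 1 E) u = -2 * pd 1 (pd 0 F) u := by
      intro u hu
      rw [pd_congr hU hu (g := fun x => -2 * pd 0 F x) h3,
          pd_const_mul _ (diffAt_of_contDiffOn hU hFp hu)]
    have s4 : ∀ u ∈ U, pd 0 (pd 0 G) u = -2 * pd 0 (pd 1 F) u := by
      intro u hu
      rw [pd_congr hU hu (g := fun x => -2 * pd 1 F x) h4,
          pd_const_mul _ (diffAt_of_contDiffOn hU hFq hu)]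
    -- the constant a
    have hAsm : ContDiffOn ℝ (⊤ : ℕ∞) (pd 0 (pd 1 F)) U := contDiffOn_pd hU hFq 0
    have hA0 : ∀ u ∈ U, pd 0 (pd 0 (pd 1 F)) u = 0 := by
      intro u hu
      rw [pd_congr hU hu (g := pd 1 (pd 0 F)) (fun x hx => pd_comm hU hF hx 0 1),
          pd_comm hU (contDiffOn_pd hU hF 0) hu 0 1,
          pd_congr hU hu (f := pd 0 (pd 0 F)) (g := fun _ => (0:ℝ)) s1]
      simp
    have hA1 : ∀ u ∈ U, pd 1 (pd 0 (pd 1 F)) u = 0 := by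
      intro u hu
      rw [pd_comm hU hFq hu 1 0,
          pd_congr hU hu (f := pd 1 (pd 1 F)) (g := fun _ => (0:ℝ)) s2]
      simp
    have hAconst := const_of_pd_zero hU hUc hAsm hA0 hA1
    set a : ℝ := -(pd 0 (pd 1 F) u₀) with hadef
    have ha : ∀ u ∈ U, pd 0 (pd 1 F) u = -a := by
      intro u hu; rw [hadef, neg_neg]; exact hAconst u hu u₀ hu₀
    have ha' : ∀ u ∈ U, pd 1 (pd 0 F) u = -a := by
      intro u hu; rw [← pd_comm hU hF hu 0 1]; exact ha u hu
    -- the constant b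
    set B' : (Fin 2 → ℝ) → ℝ := fun x => pd 1 E x - 2 * a * x 1 with hB'def
    have hB'sm : ContDiffOn ℝ (⊤ : ℕ∞) B' U :=
      hEq.sub ((by fun_prop : ContDiff ℝ (⊤ : ℕ∞) (fun x : Fin 2 → ℝ => 2 * a * x 1)).contDiffOn)
    have hB'0 : ∀ u ∈ U, pd 0 B' u = 0 := by
      intro u hu
      rw [hB'def, pd_sub (diffAt_of_contDiffOn hU hEq hu) (by fun_prop), hEmix u hu]
      simp (disch := fun_prop) only [pd_const_mul, pd_coord]
      norm_num
    have hB'1 : ∀ u ∈ U, pd 1 B' u = 0 := by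
      intro u hu
      rw [hB'def, pd_sub (diffAt_of_contDiffOn hU hEq hu) (by fun_prop), s3 u hu,
          ha' u hu]
      simp (disch := fun_prop) only [pd_const_mul, pd_coord]
      norm_num
    have hB'const := const_of_pd_zero hU hUc hB'sm hB'0 hB'1
    set b : ℝ := -(B' u₀) / 2 with hbdef
    have hb : ∀ u ∈ U, pd 1 E u = 2 * a * u 1 - 2 * b := by
      intro u hu
      have h := hB'const u hu u₀ hu₀
      rw [hB'def] at h
      simp only at h
      have h2' : B' u₀ = pd 1 E u₀ - 2 * a * u₀ 1 := rfl
      rw [hbdef, h2']; linear_combination h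
    -- the constant c
    set C' : (Fin 2 → ℝ) → ℝ := fun x => pd 0 G x - 2 * a * x 0 with hC'def
    have hC'sm : ContDiffOn ℝ (⊤ : ℕ∞) C' U :=
      hGp.sub ((by fun_prop : ContDiff ℝ (⊤ : ℕ∞) (fun x : Fin 2 → ℝ => 2 * a * x 0)).contDiffOn)
    have hC'1 : ∀ u ∈ U, pd 1 C' u = 0 := by
      intro u hu
      rw [hC'def, pd_sub (diffAt_of_contDiffOn hU hGp hu) (by fun_prop), hGmix u hu]
      simp (disch := fun_prop) only [pd_const_mul, pd_coord]
      norm_num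
    have hC'0 : ∀ u ∈ U, pd 0 C' u = 0 := by
      intro u hu
      rw [hC'def, pd_sub (diffAt_of_contDiffOn hU hGp hu) (by fun_prop), s4 u hu,
          ha u hu]
      simp (disch := fun_prop) only [pd_const_mul, pd_coord]
      norm_num
    have hC'const := const_of_pd_zero hU hUc hC'sm hC'0 hC'1
    set c : ℝ := (C' u₀) / 2 with hcdef
    have hc : ∀ u ∈ U, pd 0 G u = 2 * a * u 0 + 2 * c := by
      intro u hu
      have h := hC'const u hu u₀ hu₀
      rw [hC'def] at h
      simp only at h
      have h2' : C' u₀ = pd 0 G u₀ - 2 * a * u₀ 0 := rfl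
      rw [hcdef, h2']; linear_combination h
    -- first partials of F
    have hFp' : ∀ u ∈ U, pd 0 F u = -(a * u 1) + b := by
      intro u hu; have := h3 u hu; have := hb u hu; linarith
    have hFq' : ∀ u ∈ U, pd 1 F u = -(a * u 0) - c := by
      intro u hu; have := h4 u hu; have := hc u hu; linarith
    -- the constant α
    set Ea : (Fin 2 → ℝ) → ℝ := fun x => E x - (a * (x 1 * x 1) - 2 * b * x 1) with hEadef
    have hEasm : ContDiffOn ℝ (⊤ : ℕ∞) Ea U :=
      hE.sub ((by fun_prop : ContDiff ℝ (⊤ : ℕ∞)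
        (fun x : Fin 2 → ℝ => a * (x 1 * x 1) - 2 * b * x 1)).contDiffOn)
    have hEa0 : ∀ u ∈ U, pd 0 Ea u = 0 := by
      intro u hu
      rw [hEadef, pd_sub (diffAt_of_contDiffOn hU hE hu) (by fun_prop), h1 u hu]
      simp (disch := fun_prop) only [pd_sub, pd_const_mul, pd_mul, pd_coord]
      norm_num
    have hEa1 : ∀ u ∈ U, pd 1 Ea u = 0 := by
      intro u hu
      rw [hEadef, pd_sub (diffAt_of_contDiffOn hU hE hu) (by fun_prop), hb u hu]
      simp (disch := fun_prop) only [pd_sub, pd_const_mul, pd_mul, pd_coord]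
      norm_num; ring
    have hEaconst := const_of_pd_zero hU hUc hEasm hEa0 hEa1
    set α : ℝ := Ea u₀ with hαdef
    -- the constant β
    set Fa : (Fin 2 → ℝ) → ℝ :=
      fun x => F x - (-(a * (x 0 * x 1)) + b * x 0 - c * x 1) with hFadef
    have hFasm : ContDiffOn ℝ (⊤ : ℕ∞) Fa U :=
      hF.sub ((by fun_prop : ContDiff ℝ (⊤ : ℕ∞)
        (fun x : Fin 2 → ℝ => -(a * (x 0 * x 1)) + b * x 0 - c * x 1)).contDiffOn)
    have hFa0 : ∀ u ∈ U, pd 0 Fa u = 0 := by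
      intro u hu
      rw [hFadef, pd_sub (diffAt_of_contDiffOn hU hF hu) (by fun_prop), hFp' u hu]
      simp (disch := fun_prop) only [pd_add, pd_sub, pd_neg, pd_const_mul, pd_mul, pd_coord]
      norm_num
    have hFa1 : ∀ u ∈ U, pd 1 Fa u = 0 := by
      intro u hu
      rw [hFadef, pd_sub (diffAt_of_contDiffOn hU hF hu) (by fun_prop), hFq' u hu]
      simp (disch := fun_prop) only [pd_add, pd_sub, pd_neg, pd_const_mul, pd_mul, pd_coord]
      norm_num
    have hFaconst := const_of_pd_zero hU hUc hFasm hFa0 hFa1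
    set β : ℝ := Fa u₀ with hβdef
    -- the constant γ
    set Ga : (Fin 2 → ℝ) → ℝ := fun x => G x - (a * (x 0 * x 0) + 2 * c * x 0) with hGadef
    have hGasm : ContDiffOn ℝ (⊤ : ℕ∞) Ga U :=
      hG.sub ((by fun_prop : ContDiff ℝ (⊤ : ℕ∞)
        (fun x : Fin 2 → ℝ => a * (x 0 * x 0) + 2 * c * x 0)).contDiffOn)
    have hGa0 : ∀ u ∈ U, pd 0 Ga u = 0 := by
      intro u hu
      rw [hGadef, pd_sub (diffAt_of_contDiffOn hU hG hu) (by fun_prop), hc u hu]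
      simp (disch := fun_prop) only [pd_add, pd_const_mul, pd_mul, pd_coord]
      norm_num; ring
    have hGa1 : ∀ u ∈ U, pd 1 Ga u = 0 := by
      intro u hu
      rw [hGadef, pd_sub (diffAt_of_contDiffOn hU hG hu) (by fun_prop), h2 u hu]
      simp (disch := fun_prop) only [pd_add, pd_const_mul, pd_mul, pd_coord]
      norm_num
    have hGaconst := const_of_pd_zero hU hUc hGasm hGa0 hGa1
    set γ : ℝ := Ga u₀ with hγdef
    refine ⟨a, b, c, α, β, γ, fun u hu => ?_⟩
    have he : E u = a * (u 1) ^ 2 - 2 * b * u 1 + α := by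
      have h := hEaconst u hu u₀ hu₀
      rw [hEadef] at h; simp only at h
      have h2' : Ea u₀ = E u₀ - (a * (u₀ 1 * u₀ 1) - 2 * b * u₀ 1) := rfl
      rw [hαdef, h2']; linear_combination h
    have hf : F u = -(a * u 0 * u 1) + b * u 0 - c * u 1 + β := by
      have h := hFaconst u hu u₀ hu₀
      rw [hFadef] at h; simp only at h
      have h2' : Fa u₀ = F u₀ - (-(a * (u₀ 0 * u₀ 1)) + b * u₀ 0 - c * u₀ 1) := rfl
      rw [hβdef, h2']; linear_combination h
    have hg : G u = a * (u 0) ^ 2 + 2 * c * u 0 + γ := by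
      have h := hGaconst u hu u₀ hu₀
      rw [hGadef] at h; simp only at h
      have h2' : Ga u₀ = G u₀ - (a * (u₀ 0 * u₀ 0) + 2 * c * u₀ 0) := rfl
      rw [hγdef, h2']; linear_combination h
    exact ⟨he, hf, (hsym u hu 1 0).trans hf, hg⟩
  · rintro ⟨a, b, c, α, β, γ, h⟩ u hu i j k
    have h00 : ∀ x ∈ U, g x 0 0 = a * (x 1 * x 1) - 2 * b * x 1 + α := by
      intro x hx; rw [(h x hx).1]; ring
    have h01 : ∀ x ∈ U, g x 0 1 = -(a * (x 0 * x 1)) + b * x 0 - c * x 1 + β := by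
      intro x hx; rw [(h x hx).2.1]; ring
    have h10 : ∀ x ∈ U, g x 1 0 = -(a * (x 0 * x 1)) + b * x 0 - c * x 1 + β := by
      intro x hx; rw [(h x hx).2.2.1]; ring
    have h11 : ∀ x ∈ U, g x 1 1 = a * (x 0 * x 0) + 2 * c * x 0 + γ := by
      intro x hx; rw [(h x hx).2.2.2]; ring
    have hP00_0 : ∀ x ∈ U, pd 0 (fun y => g y 0 0) x = 0 := by
      intro x hx
      rw [pd_congr hU hx h00]
      simp (disch := fun_prop) only [pd_add, pd_sub, pd_const_mul, pd_mul, pd_coord, pd_const]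
      norm_num
    have hP00_1 : ∀ x ∈ U, pd 1 (fun y => g y 0 0) x = 2 * a * x 1 - 2 * b := by
      intro x hx
      rw [pd_congr hU hx h00]
      simp (disch := fun_prop) only [pd_add, pd_sub, pd_const_mul, pd_mul, pd_coord, pd_const]
      norm_num; ring
    have hP01_0 : ∀ x ∈ U, pd 0 (fun y => g y 0 1) x = -(a * x 1) + b := by
      intro x hx
      rw [pd_congr hU hx h01]
      simp (disch := fun_prop) only [pd_add, pd_sub, pd_neg, pd_const_mul, pd_mul, pd_coord,
        pd_const]
      norm_num
    have hP01_1 : ∀ x ∈ U, pd 1 (fun y => g y 0 1) x = -(a * x 0) - c := by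
      intro x hx
      rw [pd_congr hU hx h01]
      simp (disch := fun_prop) only [pd_add, pd_sub, pd_neg, pd_const_mul, pd_mul, pd_coord,
        pd_const]
      norm_num
    have hP10_0 : ∀ x ∈ U, pd 0 (fun y => g y 1 0) x = -(a * x 1) + b := by
      intro x hx
      rw [pd_congr hU hx h10]
      simp (disch := fun_prop) only [pd_add, pd_sub, pd_neg, pd_const_mul, pd_mul, pd_coord,
        pd_const]
      norm_num
    have hP10_1 : ∀ x ∈ U, pd 1 (fun y => g y 1 0) x = -(a * x 0) - c := by
      intro x hx
      rw [pd_congr hU hx h10]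
      simp (disch := fun_prop) only [pd_add, pd_sub, pd_neg, pd_const_mul, pd_mul, pd_coord,
        pd_const]
      norm_num
    have hP11_0 : ∀ x ∈ U, pd 0 (fun y => g y 1 1) x = 2 * a * x 0 + 2 * c := by
      intro x hx
      rw [pd_congr hU hx h11]
      simp (disch := fun_prop) only [pd_add, pd_sub, pd_const_mul, pd_mul, pd_coord, pd_const]
      norm_num; ring
    have hP11_1 : ∀ x ∈ U, pd 1 (fun y => g y 1 1) x = 0 := by
      intro x hx
      rw [pd_congr hU hx h11]
      simp (disch := fun_prop) only [pd_add, pd_sub, pd_const_mul, pd_mul, pd_coord, pd_const]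
      norm_num
    fin_cases i <;> fin_cases j <;> fin_cases k <;>
      simp only [Fin.mk_zero, Fin.mk_one, Fin.isValue, hP00_0 u hu, hP00_1 u hu, hP01_0 u hu, hP01_1 u hu,
        hP10_0 u hu, hP10_1 u hu, hP11_0 u hu, hP11_1 u hu] <;>
      ring
end
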